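/- Let D_{4d} = ⟨x, y | x^{2d} = y² = (xy)² = 1⟩ be the dihedral group of order 4d, for d ≥ 1. The smallest normal subgroup N of D_{4d} such that the assignment x ↦ y, y ↦ x induces an automorphism of D_{4d}/N satisfies D_{4d}/N ≅ D₄ (the dihedral group of order 4, i.e. the Klein four-group); hence |N| = d. -/

import Mathlib

open DihedralGroup

section DihedralHom

variable {H : Type*} [Group H] {m : ℕ} [NeZero m]

/-- Underlying map of the homomorphism from the dihedral group. -/
private def dmap (x y : H) : DihedralGroup m → H
  | r i => x ^ i.val
  | sr i => y * x ^ i.val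

variable {x y : H}

private lemma dyy (hy : y ^ 2 = 1) : y * y = 1 := by rw [← pow_two]; exact hy

private lemma dycancel (hy : y ^ 2 = 1) (c : H) : y * (y * c) = c := by
  rw [← mul_assoc, dyy hy, one_mul]

private lemma dadd (hx : x ^ m = 1) (a b : ZMod m) :
    x ^ (a + b).val = x ^ a.val * x ^ b.val := by
  rw [ZMod.val_add, ← pow_eq_pow_mod _ hx, pow_add]

private lemma dneg (hx : x ^ m = 1) (a : ZMod m) : x ^ (-a).val = (x ^ a.val)⁻¹ := by
  have h := dadd hx a (-a)
  rw [add_neg_cancel, ZMod.val_zero, pow_zero] at h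
  exact (inv_eq_of_mul_eq_one_right h.symm).symm

private lemma dconj (hy : y ^ 2 = 1) (hxy : (x * y) ^ 2 = 1) (n : ℕ) :
    y * x ^ n * y = (x ^ n)⁻¹ := by
  have hkey : y * x * y = x⁻¹ := by
    have h : x * (y * x * y) = 1 := by
      have h2 := hxy; rw [pow_two] at h2
      calc x * (y * x * y) = x * y * (x * y) := by group
        _ = 1 := h2
    exact (inv_eq_of_mul_eq_one_right h).symm
  induction n with
  | zero => simpa using dyy hy
  | succ n ih =>
    have hstep : y * x ^ (n + 1) * y = (y * x ^ n * y) * (y * x * y) := by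
      rw [pow_succ]
      calc y * (x ^ n * x) * y = y * x ^ n * ((y * y) * x) * y := by
            rw [dyy hy, one_mul]; group
        _ = (y * x ^ n * y) * (y * x * y) := by group
    rw [hstep, ih, hkey, ← mul_inv_rev, ← pow_succ']

private lemma dswap (hx : x ^ m = 1) (hy : y ^ 2 = 1) (hxy : (x * y) ^ 2 = 1)
    (a : ZMod m) : x ^ a.val * y = y * x ^ (-a).val := by
  conv_lhs => rw [← dycancel hy (x ^ a.val * y)]
  rw [dneg hx, ← dconj hy hxy a.val]
  group

/-- The homomorphism from the dihedral group determined by two elements satisfying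
the dihedral relations. -/
private def dhom (hx : x ^ m = 1) (hy : y ^ 2 = 1) (hxy : (x * y) ^ 2 = 1) :
    DihedralGroup m →* H :=
  MonoidHom.mk' (dmap x y) (by
    rintro (i | i) (j | j)
    · show x ^ (i + j).val = x ^ i.val * x ^ j.val
      exact dadd hx i j
    · show y * x ^ (j - i).val = x ^ i.val * (y * x ^ j.val)
      rw [← mul_assoc, dswap hx hy hxy, mul_assoc, ← dadd hx, neg_add_eq_sub]
    · show y * x ^ (i + j).val = (y * x ^ i.val) * x ^ j.val
      rw [mul_assoc, dadd hx]
    · show x ^ (j - i).val = (y * x ^ i.val) * (y * x ^ j.val)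
      calc x ^ (j - i).val = x ^ (-i + j).val := by rw [neg_add_eq_sub]
        _ = x ^ (-i).val * x ^ j.val := dadd hx _ _
        _ = y * (y * (x ^ (-i).val * x ^ j.val)) := (dycancel hy _).symm
        _ = y * ((y * x ^ (-i).val) * x ^ j.val) := by group
        _ = y * ((x ^ i.val * y) * x ^ j.val) := by rw [← dswap hx hy hxy]
        _ = (y * x ^ i.val) * (y * x ^ j.val) := by group)

private lemma dhom_r (hx : x ^ m = 1) (hy : y ^ 2 = 1) (hxy : (x * y) ^ 2 = 1)
    (i : ZMod m) : (dhom hx hy hxy) (r i) = x ^ i.val := rfl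

private lemma dhom_sr (hx : x ^ m = 1) (hy : y ^ 2 = 1) (hxy : (x * y) ^ 2 = 1)
    (i : ZMod m) : (dhom hx hy hxy) (sr i) = y * x ^ i.val := rfl

end DihedralHom



/-- Swapping `a` and `b` induces an automorphism of `G ⧸ N`. -/
def swapInducesAut {G : Type*} [Group G] (a b : G) (N : Subgroup G) (hN : N.Normal) :
    Prop := by
  letI := hN
  exact ∃ φ : (G ⧸ N) ≃* (G ⧸ N),
    φ (QuotientGroup.mk a) = QuotientGroup.mk b ∧
    φ (QuotientGroup.mk b) = QuotientGroup.mk a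

/-- `G ⧸ N` is isomorphic to `T`. -/
def quotIsoTo {G : Type*} [Group G] (N : Subgroup G) (hN : N.Normal)
    (T : Type*) [Group T] : Prop := by
  letI := hN
  exact Nonempty ((G ⧸ N) ≃* T)

/-- Relators of the dihedral group `D_{2m} = ⟨x, y | x^m = y² = (xy)² = 1⟩`,
with generator `0` for `x` and `1` for `y`. -/
def dihedralRels (m : ℕ) : Set (FreeGroup (Fin 2)) :=
  {FreeGroup.of 0 ^ m, FreeGroup.of 1 ^ 2, (FreeGroup.of 0 * FreeGroup.of 1) ^ 2}

/-- For `D_{4d} = ⟨x, y | x^{2d} = y² = (xy)² = 1⟩`, the smallest normal subgroup `N`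
such that swapping `x` and `y` induces an automorphism of the quotient satisfies
`D_{4d} ⧸ N ≅ D₄` (the dihedral group of order 4); hence `|N| = d`. -/

theorem stmt_8 (d : ℕ) (hd : 1 ≤ d) :
    letI G := PresentedGroup (dihedralRels (2 * d))
    letI x : G := PresentedGroup.of 0
    letI y : G := PresentedGroup.of 1
    ∃ (N : Subgroup G) (hN : N.Normal),
      swapInducesAut x y N hN ∧
      (∀ (M : Subgroup G) (hM : M.Normal), swapInducesAut x y M hM → N ≤ M) ∧
      quotIsoTo N hN (DihedralGroup 2) ∧ Nat.card N = d := by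
  set G := PresentedGroup (dihedralRels (2 * d)) with hGdef
  set x : G := PresentedGroup.of 0 with hxdef
  set y : G := PresentedGroup.of 1 with hydef
  haveI : NeZero (2 * d) := ⟨by omega⟩
  haveI : Fact (1 < 2 * d) := ⟨by omega⟩
  -- the relators hold in G
  have hone : ∀ w ∈ dihedralRels (2 * d), PresentedGroup.mk (dihedralRels (2 * d)) w = 1 :=
    fun w hw => (QuotientGroup.eq_one_iff w).mpr (Subgroup.subset_normalClosure hw)
  have hX : x ^ (2 * d) = 1 := by
    have h := hone (FreeGroup.of 0 ^ (2 * d)) (by simp [dihedralRels])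
    rw [map_pow] at h; exact h
  have hY : y ^ 2 = 1 := by
    have h := hone (FreeGroup.of 1 ^ 2) (by simp [dihedralRels])
    rw [map_pow] at h; exact h
  have hXY : (x * y) ^ 2 = 1 := by
    have h := hone ((FreeGroup.of 0 * FreeGroup.of 1) ^ 2) (by simp [dihedralRels])
    rw [map_pow, map_mul] at h; exact h
  have hYX : (y * x) ^ 2 = 1 := by
    have h2 := hXY
    rw [pow_two] at h2 ⊢
    calc y * x * (y * x) = x⁻¹ * (x * y * (x * y)) * x := by group
      _ = 1 := by rw [h2]; group
  -- the subgroup N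
  set N : Subgroup G := Subgroup.normalClosure {x ^ 2} with hNdef
  haveI hN : N.Normal := Subgroup.normalClosure_normal
  set π : G →* G ⧸ N := QuotientGroup.mk' N with hπdef
  have hqx : (π x) ^ 2 = 1 := by
    rw [← map_pow]
    exact (QuotientGroup.eq_one_iff _).mpr
      (Subgroup.subset_normalClosure (Set.mem_singleton _))
  have hqy : (π y) ^ 2 = 1 := by rw [← map_pow, hY, map_one]
  have hqxy : (π x * π y) ^ 2 = 1 := by rw [← map_mul, ← map_pow, hXY, map_one]
  have hqyx : (π y * π x) ^ 2 = 1 := by rw [← map_mul, ← map_pow, hYX, map_one]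
  -- the swap automorphism of G ⧸ N
  have hf : ∀ w ∈ dihedralRels (2 * d),
      (FreeGroup.lift (![π y, π x] : Fin 2 → G ⧸ N)) w = 1 := by
    intro w hw
    simp only [dihedralRels, Set.mem_insert_iff, Set.mem_singleton_iff] at hw
    rcases hw with rfl | rfl | rfl
    · rw [map_pow, FreeGroup.lift_apply_of]
      show (![π y, π x] 0) ^ (2 * d) = 1
      rw [Matrix.cons_val_zero, pow_mul, hqy, one_pow]
    · rw [map_pow, FreeGroup.lift_apply_of]
      show (![π y, π x] 1) ^ 2 = 1
      rw [Matrix.cons_val_one, Matrix.cons_val_zero]; exact hqx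
    · rw [map_pow, map_mul, FreeGroup.lift_apply_of, FreeGroup.lift_apply_of]
      show (![π y, π x] 0 * ![π y, π x] 1) ^ 2 = 1
      rw [Matrix.cons_val_zero, Matrix.cons_val_one, Matrix.cons_val_zero]; exact hqyx
  set s : G →* G ⧸ N := PresentedGroup.toGroup hf with hsdef
  have hsx : s x = π y := by
    show PresentedGroup.toGroup hf (PresentedGroup.of 0) = π y
    rw [PresentedGroup.toGroup.of]; simp
  have hsy : s y = π x := by
    show PresentedGroup.toGroup hf (PresentedGroup.of 1) = π x
    rw [PresentedGroup.toGroup.of]; simp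
  have hker : N ≤ s.ker := by
    have hm : x ^ 2 ∈ s.ker := by rw [MonoidHom.mem_ker, map_pow, hsx]; exact hqy
    exact Subgroup.normalClosure_le_normal (Set.singleton_subset_iff.mpr hm)
  set φ₀ : G ⧸ N →* G ⧸ N := QuotientGroup.lift N s hker with hφ₀def
  have hφ₀x : φ₀ (π x) = π y := by rw [hπdef]; exact (QuotientGroup.lift_mk' N hker x).trans hsx
  have hφ₀y : φ₀ (π y) = π x := by rw [hπdef]; exact (QuotientGroup.lift_mk' N hker y).trans hsy
  have hφφ : φ₀.comp φ₀ = MonoidHom.id (G ⧸ N) := by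
    apply QuotientGroup.monoidHom_ext
    apply PresentedGroup.ext
    intro i
    fin_cases i
    · show φ₀ (φ₀ (π x)) = π x
      rw [hφ₀x, hφ₀y]
    · show φ₀ (φ₀ (π y)) = π y
      rw [hφ₀y, hφ₀x]
  set φ : (G ⧸ N) ≃* (G ⧸ N) := MonoidHom.toMulEquiv φ₀ φ₀ hφφ hφφ with hφdef
  -- the isomorphism with DihedralGroup 2
  have hf2 : ∀ w ∈ dihedralRels (2 * d),
      (FreeGroup.lift (![DihedralGroup.r 1, DihedralGroup.sr 0] : Fin 2 → DihedralGroup 2)) w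
        = 1 := by
    intro w hw
    simp only [dihedralRels, Set.mem_insert_iff, Set.mem_singleton_iff] at hw
    rcases hw with rfl | rfl | rfl
    · rw [map_pow, FreeGroup.lift_apply_of]
      show (![DihedralGroup.r 1, DihedralGroup.sr 0] 0) ^ (2 * d) = 1
      rw [Matrix.cons_val_zero, DihedralGroup.r_one_pow]
      have hcast : ((2 * d : ℕ) : ZMod 2) = 0 := by
        rw [Nat.cast_mul, show ((2 : ℕ) : ZMod 2) = 0 from ZMod.natCast_self 2, zero_mul]
      rw [hcast, DihedralGroup.one_def]
    · rw [map_pow, FreeGroup.lift_apply_of]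
      show (![DihedralGroup.r 1, DihedralGroup.sr 0] 1) ^ 2 = 1
      rw [Matrix.cons_val_one, Matrix.cons_val_zero, pow_two, DihedralGroup.sr_mul_self]
    · rw [map_pow, map_mul, FreeGroup.lift_apply_of, FreeGroup.lift_apply_of]
      show (![DihedralGroup.r 1, DihedralGroup.sr 0] 0
          * ![DihedralGroup.r 1, DihedralGroup.sr 0] 1) ^ 2 = 1
      rw [Matrix.cons_val_zero, Matrix.cons_val_one, Matrix.cons_val_zero,
        DihedralGroup.r_mul_sr, pow_two, DihedralGroup.sr_mul_self]
  set t : G →* DihedralGroup 2 := PresentedGroup.toGroup hf2 with htdef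
  have htx : t x = DihedralGroup.r 1 := by
    show PresentedGroup.toGroup hf2 (PresentedGroup.of 0) = DihedralGroup.r 1
    rw [PresentedGroup.toGroup.of]; simp
  have hty : t y = DihedralGroup.sr 0 := by
    show PresentedGroup.toGroup hf2 (PresentedGroup.of 1) = DihedralGroup.sr 0
    rw [PresentedGroup.toGroup.of]; simp
  have hker2 : N ≤ t.ker := by
    have hm : x ^ 2 ∈ t.ker := by
      rw [MonoidHom.mem_ker, map_pow, htx, pow_two, DihedralGroup.r_mul_r,
        show ((1 : ZMod 2) + 1) = 0 by decide, DihedralGroup.one_def]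
    exact Subgroup.normalClosure_le_normal (Set.singleton_subset_iff.mpr hm)
  set h2 : G ⧸ N →* DihedralGroup 2 := QuotientGroup.lift N t hker2 with hh2def
  have hh2x : h2 (π x) = DihedralGroup.r 1 := by
    rw [hπdef]; exact (QuotientGroup.lift_mk' N hker2 x).trans htx
  have hh2y : h2 (π y) = DihedralGroup.sr 0 := by
    rw [hπdef]; exact (QuotientGroup.lift_mk' N hker2 y).trans hty
  set ψ2 : DihedralGroup 2 →* G ⧸ N := dhom hqx hqy hqxy with hψ2def
  have hcomp1 : ψ2.comp h2 = MonoidHom.id (G ⧸ N) := by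
    apply QuotientGroup.monoidHom_ext
    apply PresentedGroup.ext
    intro i
    fin_cases i
    · show ψ2 (h2 (π x)) = π x
      rw [hh2x, hψ2def, dhom_r]
      norm_num [ZMod.val_one]
    · show ψ2 (h2 (π y)) = π y
      rw [hh2y, hψ2def, dhom_sr]
      norm_num [ZMod.val_zero]
  have hcomp2 : h2.comp ψ2 = MonoidHom.id (DihedralGroup 2) := by
    ext g
    rcases g with i | i
    · show h2 (ψ2 (DihedralGroup.r i)) = DihedralGroup.r i
      rw [hψ2def, dhom_r, map_pow, hh2x, DihedralGroup.r_one_pow,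
        ZMod.natCast_rightInverse i]
    · show h2 (ψ2 (DihedralGroup.sr i)) = DihedralGroup.sr i
      rw [hψ2def, dhom_sr, map_mul, map_pow, hh2x, hh2y, DihedralGroup.r_one_pow,
        ZMod.natCast_rightInverse i, DihedralGroup.sr_mul_r, zero_add]
  have e2 : (G ⧸ N) ≃* DihedralGroup 2 := MonoidHom.toMulEquiv h2 ψ2 hcomp1 hcomp2
  -- the isomorphism G ≃* DihedralGroup (2 * d)
  have hfb : ∀ w ∈ dihedralRels (2 * d),
      (FreeGroup.lift (![DihedralGroup.r 1, DihedralGroup.sr 0]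
        : Fin 2 → DihedralGroup (2 * d))) w = 1 := by
    intro w hw
    simp only [dihedralRels, Set.mem_insert_iff, Set.mem_singleton_iff] at hw
    rcases hw with rfl | rfl | rfl
    · rw [map_pow, FreeGroup.lift_apply_of]
      show (![DihedralGroup.r 1, DihedralGroup.sr 0] 0) ^ (2 * d) = 1
      rw [Matrix.cons_val_zero, DihedralGroup.r_one_pow, ZMod.natCast_self,
        DihedralGroup.one_def]
    · rw [map_pow, FreeGroup.lift_apply_of]
      show (![DihedralGroup.r 1, DihedralGroup.sr 0] 1) ^ 2 = 1
      rw [Matrix.cons_val_one, Matrix.cons_val_zero, pow_two, DihedralGroup.sr_mul_self]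
    · rw [map_pow, map_mul, FreeGroup.lift_apply_of, FreeGroup.lift_apply_of]
      show (![DihedralGroup.r 1, DihedralGroup.sr 0] 0
          * ![DihedralGroup.r 1, DihedralGroup.sr 0] 1) ^ 2 = 1
      rw [Matrix.cons_val_zero, Matrix.cons_val_one, Matrix.cons_val_zero,
        DihedralGroup.r_mul_sr, pow_two, DihedralGroup.sr_mul_self]
  set tb : G →* DihedralGroup (2 * d) := PresentedGroup.toGroup hfb with htbdef
  have htbx : tb x = DihedralGroup.r 1 := by
    show PresentedGroup.toGroup hfb (PresentedGroup.of 0) = DihedralGroup.r 1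
    rw [PresentedGroup.toGroup.of]; simp
  have htby : tb y = DihedralGroup.sr 0 := by
    show PresentedGroup.toGroup hfb (PresentedGroup.of 1) = DihedralGroup.sr 0
    rw [PresentedGroup.toGroup.of]; simp
  set ψb : DihedralGroup (2 * d) →* G := dhom hX hY hXY with hψbdef
  have hcomp1b : ψb.comp tb = MonoidHom.id G := by
    apply PresentedGroup.ext
    intro i
    fin_cases i
    · show ψb (tb x) = x
      rw [htbx, hψbdef, dhom_r, ZMod.val_one, pow_one]
    · show ψb (tb y) = y
      rw [htby, hψbdef, dhom_sr, ZMod.val_zero, pow_zero, mul_one]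
  have hcomp2b : tb.comp ψb = MonoidHom.id (DihedralGroup (2 * d)) := by
    ext g
    rcases g with i | i
    · show tb (ψb (DihedralGroup.r i)) = DihedralGroup.r i
      rw [hψbdef, dhom_r, map_pow, htbx, DihedralGroup.r_one_pow,
        ZMod.natCast_rightInverse i]
    · show tb (ψb (DihedralGroup.sr i)) = DihedralGroup.sr i
      rw [hψbdef, dhom_sr, map_mul, map_pow, htbx, htby, DihedralGroup.r_one_pow,
        ZMod.natCast_rightInverse i, DihedralGroup.sr_mul_r, zero_add]
  have eb : G ≃* DihedralGroup (2 * d) := MonoidHom.toMulEquiv tb ψb hcomp1b hcomp2b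
  -- cardinalities
  have hcardG : Nat.card G = 2 * (2 * d) := by
    rw [Nat.card_congr eb.toEquiv, DihedralGroup.nat_card]
  have hcardQ : Nat.card (G ⧸ N) = 2 * 2 := by
    rw [Nat.card_congr e2.toEquiv, DihedralGroup.nat_card]
  have hlagrange := Subgroup.card_eq_card_quotient_mul_card_subgroup N
  refine ⟨N, hN, ?_, ?_, ?_, ?_⟩
  · exact ⟨φ, hφ₀x, hφ₀y⟩
  · intro M hM hswap
    haveI := hM
    have hswap' : ∃ ρ : (G ⧸ M) ≃* (G ⧸ M),
        ρ (QuotientGroup.mk x) = QuotientGroup.mk y ∧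
        ρ (QuotientGroup.mk y) = QuotientGroup.mk x := hswap
    obtain ⟨ρ, _, hρy⟩ := hswap'
    set π' : G →* G ⧸ M := QuotientGroup.mk' M with hπ'def
    have hy1 : π' y ^ 2 = 1 := by rw [← map_pow, hY, map_one]
    have hx1 : π' x ^ 2 = 1 := by
      calc π' x ^ 2 = ρ (π' y) ^ 2 := by rw [show ρ (π' y) = π' x from hρy]
        _ = ρ (π' y ^ 2) := (map_pow ρ _ 2).symm
        _ = 1 := by rw [hy1, map_one]
    have hx2M : x ^ 2 ∈ M := by
      have hone' : π' (x ^ 2) = 1 := by rw [map_pow]; exact hx1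
      exact (QuotientGroup.eq_one_iff _).mp hone'
    exact Subgroup.normalClosure_le_normal (Set.singleton_subset_iff.mpr hx2M)
  · exact ⟨e2⟩
  · have hl : Nat.card N = d := by
      rw [hcardG, hcardQ] at hlagrange
      omega
    exact hl
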